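/- arXiv:1311.0335 — 6 statements merged into one kernel-verified Lean document; each statement's English description precedes it below -/
import Mathlib

section
/- Fix a base b ≥ 2, an integer k ≥ 1, and a digit d ∈ {0,…,b−1}; let p_b(k,i) be the number of blocks of length k in base b in which the digit d occurs exactly i times. Then for every real ε with 6/k ≤ ε ≤ 1/b, both Σ_{i : 0 ≤ i ≤ k/b − εk} p_b(k,i) ≤ b^k · e^{−bε²k/6} and Σ_{i : k/b + εk ≤ i ≤ k} p_b(k,i) ≤ b^k · e^{−bε²k/6}. -/
/-!
Chernoff's method. Weighting each block by `y ^ (number of d's)` gives the generating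
function `∑ i, p_b(k,i) y ^ i = (y + b - 1) ^ k`, so for a tilt `y ≥ 0` pushing the tail's
weights above `y ^ (y k / b)` (Markov's inequality) the tail is at most
`(y + b - 1) ^ k / y ^ (y k / b) ≤ b ^ k · exp (-k · klFun y / b)`, using `1 + t ≤ exp t`.
Taking `y = 1 ∓ bε` and `klFun (1 + x) ≥ x² / 3` for `|x| ≤ 1` gives both bounds.
-/

/-- `numBlocks b k d i` is the number of blocks of length `k` in base `b` (i.e. elements
of `{0, …, b−1}^k`) in which the digit `d` occurs exactly `i` times. -/
def numBlocks (b k d i : ℕ) : ℕ :=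
  ((Finset.univ : Finset (Fin k → Fin b)).filter fun x =>
    (Finset.univ.filter fun j => (x j : ℕ) = d).card = i).card

open Finset Real InformationTheory

theorem Fin.sum_ite_val_eq {R : Type*} [AddCommMonoidWithOne R] {b d : ℕ} (hd : d < b) (w : R) :
    ∑ v : Fin b, (if (v : ℕ) = d then w else 1) = w + (b - 1 : ℕ) := by
  rw [← add_sum_erase _ _ (mem_univ (⟨d, hd⟩ : Fin b)), if_pos rfl,
    sum_congr rfl fun v hv => if_neg fun h => (ne_of_mem_erase hv) (Fin.ext h)]
  simp

theorem sum_numBlocks_mul_pow {R : Type*} [CommSemiring R] {b d : ℕ} (hd : d < b) (k : ℕ)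
    (w : R) :
    ∑ i ∈ range (k + 1), (numBlocks b k d i : R) * w ^ i = (w + (b - 1 : ℕ)) ^ k := by
  have count_mem (x : Fin k → Fin b) : #{j | (x j : ℕ) = d} ∈ range (k + 1) :=
    mem_range_succ_iff.2 <| (card_filter_le _ _).trans_eq (card_fin k)
  calc ∑ i ∈ range (k + 1), (numBlocks b k d i : R) * w ^ i
      = ∑ x : Fin k → Fin b, w ^ #{j | (x j : ℕ) = d} := by
        rw [← sum_fiberwise_of_maps_to (fun x _ => count_mem x)]
        refine sum_congr rfl fun i _ => ?_
        rw [sum_congr rfl fun x hx => by rw [(mem_filter.1 hx).2], sum_const, nsmul_eq_mul]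
        rfl
    _ = ∑ x : Fin k → Fin b, ∏ j, if (x j : ℕ) = d then w else 1 := by
        simp only [prod_ite, prod_const, one_pow, mul_one]
    _ = ∏ _j : Fin k, ∑ v : Fin b, if (v : ℕ) = d then w else 1 :=
        (Fintype.prod_sum fun (_ : Fin k) (v : Fin b) => if (v : ℕ) = d then w else 1).symm
    _ = (w + (b - 1 : ℕ)) ^ k := by
        rw [Fin.sum_ite_val_eq hd, prod_const, card_univ, Fintype.card_fin]

theorem sq_sub_one_div_two_le_klFun {y : ℝ} (h₀ : 0 ≤ y) (h₁ : y ≤ 1) :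
    (y - 1) ^ 2 / 2 ≤ klFun y := by
  rcases h₀.eq_or_lt with rfl | hpos
  · norm_num [klFun_zero]
  -- `sinh u ≤ u` for `u = log y ≤ 0`, and `sinh (log y) = (y - y⁻¹) / 2`
  have hlog : (y - y⁻¹) / 2 ≤ log y := by
    rw [← sinh_log hpos, sinh_le_self_iff]
    exact log_nonpos h₀ h₁
  have := mul_le_mul_of_nonneg_left hlog h₀
  rw [klFun_apply]
  field_simp at this
  nlinarith

theorem sq_sub_one_div_add_one_le_klFun {y : ℝ} (h₁ : 1 ≤ y) :
    (y - 1) ^ 2 / (y + 1) ≤ klFun y := by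
  have hlog : 2 * (y - 1) / (y + 1) ≤ log y := by
    simpa [add_comm, sub_add_cancel, show y - 1 + 2 = y + 1 by ring] using
      le_log_one_add_of_nonneg (sub_nonneg.2 h₁)
  have := mul_le_mul_of_nonneg_left hlog (by linarith : (0:ℝ) ≤ y)
  rw [klFun_apply, div_le_iff₀ (by linarith)]
  rw [mul_div_assoc', div_le_iff₀ (by linarith)] at this
  nlinarith

theorem sq_sub_one_div_three_le_klFun {y : ℝ} (h₀ : 0 ≤ y) (h₂ : y ≤ 2) :
    (y - 1) ^ 2 / 3 ≤ klFun y := by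
  rcases le_total y 1 with h₁ | h₁
  · exact le_trans (by gcongr; norm_num) (sq_sub_one_div_two_le_klFun h₀ h₁)
  · exact le_trans (by gcongr; linarith) (sq_sub_one_div_add_one_le_klFun h₁)

theorem exp_neg_klFun_div_mul_rpow {y : ℝ} (hy : 0 ≤ y) (c : ℝ) :
    exp (-klFun y / c) * y ^ (y / c) = exp ((y - 1) / c) := by
  rcases hy.eq_or_lt with rfl | hpos
  · simp [klFun_zero]
  rw [rpow_def_of_pos hpos, ← exp_add, klFun_apply]
  ring_nf

theorem rpow_div_self_pos {y : ℝ} (hy : 0 ≤ y) (c : ℝ) : 0 < y ^ (y / c) := by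
  rcases hy.eq_or_lt with rfl | hpos
  · simp -- the exponent vanishes with `y`, and `0 ^ 0 = 1`
  · exact rpow_pos_of_pos hpos _

theorem sum_numBlocks_le_of_rpow_le {b k d : ℕ} (hd : d < b) {s : Finset ℕ}
    (hs : s ⊆ range (k + 1)) {y : ℝ} (hy : 0 ≤ y)
    (hys : ∀ i ∈ s, y ^ (y / b * k) ≤ y ^ i) :
    ((∑ i ∈ s, numBlocks b k d i : ℕ) : ℝ) ≤ b ^ k * exp (-(k * klFun y) / b) := by
  have hb : (0 : ℝ) < b := by exact_mod_cast pos_of_gt hd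
  have hweight : 0 < y ^ (y / b * k) := by
    rw [rpow_mul_natCast hy]; exact pow_pos (rpow_div_self_pos hy _) k
  have hblock : y + (b - 1 : ℕ) ≤ b * exp (-klFun y / b) * y ^ (y / b) := by
    rw [mul_assoc, exp_neg_klFun_div_mul_rpow hy, Nat.cast_pred (by omega)]
    calc y + (b - 1) = b * ((y - 1) / b + 1) := by field_simp; ring
      _ ≤ b * exp ((y - 1) / b) := by gcongr; exact add_one_le_exp _
  refine le_of_mul_le_mul_right ?_ hweight
  calc ((∑ i ∈ s, numBlocks b k d i : ℕ) : ℝ) * y ^ (y / b * k)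
      ≤ ∑ i ∈ s, (numBlocks b k d i : ℝ) * y ^ i := by
        push_cast
        rw [sum_mul]
        exact sum_le_sum fun i hi => mul_le_mul_of_nonneg_left (hys i hi) (Nat.cast_nonneg _)
    _ ≤ ∑ i ∈ range (k + 1), (numBlocks b k d i : ℝ) * y ^ i :=
        sum_le_sum_of_subset_of_nonneg hs fun i _ _ => by positivity
    _ = (y + (b - 1 : ℕ)) ^ k := sum_numBlocks_mul_pow hd k y
    _ ≤ (b * exp (-klFun y / b) * y ^ (y / b)) ^ k := by gcongr
    _ = b ^ k * exp (-(k * klFun y) / b) * y ^ (y / b * k) := by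
        rw [mul_pow, mul_pow, ← exp_nat_mul, rpow_mul_natCast hy]
        ring_nf

theorem sum_numBlocks_le_of_le_one {b k d : ℕ} (hd : d < b) {y : ℝ} (hy₀ : 0 ≤ y)
    (hy₁ : y ≤ 1) :
    ((∑ i ∈ (range (k + 1)).filter (fun i : ℕ => (i : ℝ) ≤ y / b * k),
        numBlocks b k d i : ℕ) : ℝ) ≤ b ^ k * exp (-(k * klFun y) / b) :=
  sum_numBlocks_le_of_rpow_le hd (filter_subset _ _) hy₀ fun i hi => by
    rw [← rpow_natCast]
    exact rpow_le_rpow_of_exponent_ge' hy₀ hy₁ i.cast_nonneg (mem_filter.1 hi).2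

theorem sum_numBlocks_le_of_one_le {b k d : ℕ} (hd : d < b) {y : ℝ} (hy : 1 ≤ y) :
    ((∑ i ∈ (range (k + 1)).filter (fun i : ℕ => y / b * k ≤ (i : ℝ)),
        numBlocks b k d i : ℕ) : ℝ) ≤ b ^ k * exp (-(k * klFun y) / b) :=
  sum_numBlocks_le_of_rpow_le hd (filter_subset _ _) (zero_le_one.trans hy) fun i hi => by
    rw [← rpow_natCast]
    exact rpow_le_rpow_of_exponent_le hy (mem_filter.1 hi).2

theorem numBlocks_tail_bounds_general
    (b k d : ℕ) (hd : d < b)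
    (ε : ℝ) (hε₁ : 6 / (k : ℝ) ≤ ε) (hε₂ : ε ≤ 1 / (b : ℝ)) :
    ((∑ i ∈ (Finset.range (k + 1)).filter (fun i : ℕ => (i : ℝ) ≤ (k : ℝ) / b - ε * k),
        numBlocks b k d i : ℕ) : ℝ) ≤ (b : ℝ) ^ k * Real.exp (-((b : ℝ) * ε ^ 2 * k) / 6) ∧
    ((∑ i ∈ (Finset.range (k + 1)).filter (fun i : ℕ => (k : ℝ) / b + ε * k ≤ (i : ℝ)),
        numBlocks b k d i : ℕ) : ℝ) ≤ (b : ℝ) ^ k * Real.exp (-((b : ℝ) * ε ^ 2 * k) / 6) := by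
  have hb : (0 : ℝ) < b := by exact_mod_cast pos_of_gt hd
  have hε : 0 ≤ ε := le_trans (by positivity) hε₁
  have hbε : b * ε ≤ 1 := by rwa [le_div_iff₀' hb] at hε₂
  have hexp {y : ℝ} (h₀ : 0 ≤ y) (h₂ : y ≤ 2) (hy : (y - 1) ^ 2 = (b * ε) ^ 2) :
      (b : ℝ) ^ k * exp (-(k * klFun y) / b) ≤ b ^ k * exp (-(b * ε ^ 2 * k) / 6) := by
    have hkl := sq_sub_one_div_three_le_klFun h₀ h₂
    rw [hy] at hkl
    gcongr _ * exp ?_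
    rw [div_le_div_iff₀ hb (by norm_num)]
    nlinarith [mul_le_mul_of_nonneg_left hkl k.cast_nonneg]
  constructor
  · rw [show (k : ℝ) / b - ε * k = (1 - b * ε) / b * k by field_simp]
    exact (sum_numBlocks_le_of_le_one hd (by linarith) (by nlinarith)).trans
      (hexp (by linarith) (by nlinarith) (by ring))
  · rw [show (k : ℝ) / b + ε * k = (1 + b * ε) / b * k by field_simp]
    exact (sum_numBlocks_le_of_one_le hd (by nlinarith)).trans
      (hexp (by nlinarith) (by linarith) (by ring))

/-- For a base `b ≥ 2`, length `k ≥ 1`, digit `d < b`, and any real `ε` with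
`6/k ≤ ε ≤ 1/b`, the number of blocks of length `k` in base `b` in which `d` occurs at
most `k/b − εk` times, as well as the number of those in which `d` occurs at least
`k/b + εk` times, is at most `b^k · e^{−bε²k/6}`. -/
theorem numBlocks_tail_bounds
    (b k d : ℕ) (hb : 2 ≤ b) (hk : 1 ≤ k) (hd : d < b)
    (ε : ℝ) (hε₁ : 6 / (k : ℝ) ≤ ε) (hε₂ : ε ≤ 1 / (b : ℝ)) :
    ((∑ i ∈ (Finset.range (k + 1)).filter (fun i : ℕ => (i : ℝ) ≤ (k : ℝ) / b - ε * k),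
        numBlocks b k d i : ℕ) : ℝ) ≤ (b : ℝ) ^ k * Real.exp (-((b : ℝ) * ε ^ 2 * k) / 6) ∧
    ((∑ i ∈ (Finset.range (k + 1)).filter (fun i : ℕ => (k : ℝ) / b + ε * k ≤ (i : ℝ)),
        numBlocks b k d i : ℕ) : ℝ) ≤ (b : ℝ) ^ k * Real.exp (-((b : ℝ) * ε ^ 2 * k) / 6) :=
  numBlocks_tail_bounds_general b k d hd ε hε₁ hε₂
end

section
/- Let t ≥ 2 be an integer and let ε and δ be real numbers with 0 < ε ≤ 1/t and 0 < δ < 1. Let k be the least integer greater than max(⌈6/ε⌉, −ln(δ/(2t))·6/ε²). Then for every base b with 2 ≤ b ≤ t and every integer k' ≥ k, the number of blocks x of length k' in base b with D(x,b) > ε is less than δ·b^{k'}. -/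
/-- The simple discrepancy `D(u, b)` of a block `u` of digits in base `b`: the maximum
over all digits `d < b` of `|occ(u,d)/|u| − 1/b|`. -/
noncomputable def simpleDisc (b : ℕ) (u : List ℕ) : ℝ :=
  sSup ((fun d => |(u.count d : ℝ) / u.length - 1 / (b : ℝ)|) '' {d : ℕ | d < b})

/-!
Chernoff bound. For a fixed digit `a` and `|s| ≤ 1`, the exponential moment of the number `N`
of occurrences of `a` over all `b ^ n` blocks is `∑ₓ exp (s N) = (b - 1 + eˢ) ^ n
≤ bⁿ exp (n (s / b + s² / 2))`, so by Markov's inequality at most `bⁿ exp (-s² n / 2)` blocks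
satisfy `s N ≥ s (1 / b + s) n`. Taking `s = ± ε` bounds the blocks in which some digit
frequency deviates from `1 / b` by more than `ε`, and a union bound over the `b ≤ t` digits
leaves `2 t exp (-ε² n / 2) bⁿ`, which the choice of `n ≥ k` makes smaller than `δ bⁿ`.
-/

open Finset Real

theorem List.count_ofFn_eq_card_filter {α : Type*} [DecidableEq α] {n : ℕ} (f : Fin n → α)
    (a : α) : (List.ofFn f).count a = #{i | f i = a} := by
  rw [← Multiset.coe_count, ← Fin.univ_val_map, Multiset.count_map, card_def, filter_val]
  simp_rw [eq_comm]

theorem sum_pow_card_filter_eq {α R : Type*} [Fintype α] [DecidableEq α] [CommRing R]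
    (n : ℕ) (a : α) (y : R) :
    ∑ x : Fin n → α, y ^ #{i | x i = a} = (Fintype.card α - 1 + y) ^ n := by
  have hprod (x : Fin n → α) : y ^ #{i | x i = a} = ∏ i, if x i = a then y else 1 := by
    rw [prod_ite, prod_const_one, mul_one, prod_const]
  have hsum : ∑ c : α, (if c = a then y else 1) = Fintype.card α - 1 + y := by
    rw [Fintype.sum_eq_add_sum_compl a, if_pos rfl,
      sum_congr rfl fun c hc => if_neg (by simpa using hc), sum_const, card_compl,
      card_singleton, nsmul_one, Nat.cast_sub (Fintype.card_pos_iff.2 ⟨a⟩)]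
    ring
  simp_rw [hprod, ← hsum, Fintype.sum_pow]

theorem card_filter_le_exp_neg_mul_sum_exp {α : Type*} (s : Finset α) (g : α → ℝ) (c : ℝ) :
    (#{x ∈ s | c ≤ g x} : ℝ) ≤ exp (-c) * ∑ x ∈ s, exp (g x) := by
  have hmarkov : #{x ∈ s | c ≤ g x} * exp c ≤ ∑ x ∈ s, exp (g x) :=
    calc #{x ∈ s | c ≤ g x} * exp c = ∑ x ∈ s with c ≤ g x, exp c := by
          rw [sum_const, nsmul_eq_mul]
      _ ≤ ∑ x ∈ s with c ≤ g x, exp (g x) :=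
          sum_le_sum fun x hx => exp_le_exp.2 (mem_filter.1 hx).2
      _ ≤ ∑ x ∈ s, exp (g x) :=
          sum_le_sum_of_subset_of_nonneg (filter_subset _ _) fun _ _ _ => (exp_pos _).le
  rwa [exp_neg, ← div_eq_inv_mul, le_div_iff₀ (exp_pos c)]

theorem sub_one_add_exp_le {b s : ℝ} (hb : 2 ≤ b) (hs : |s| ≤ 1) :
    b - 1 + exp s ≤ b * exp (s / b + s ^ 2 / 2) := by
  have hquad : exp s ≤ 1 + s + s ^ 2 := by
    linarith [(abs_le.1 (abs_exp_sub_one_sub_id_le hs)).2]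
  have hb0 : 0 < b := by linarith
  calc b - 1 + exp s ≤ b * (1 + (s + s ^ 2) / b) := by
        rw [mul_add, mul_div_cancel₀ _ hb0.ne']
        linarith
    _ ≤ b * exp ((s + s ^ 2) / b) := by
        gcongr
        linarith [add_one_le_exp ((s + s ^ 2) / b)]
    _ ≤ b * exp (s / b + s ^ 2 / 2) := by
        gcongr
        rw [add_div]
        gcongr

theorem card_deviation_le (n : ℕ) {b : ℕ} (hb : 2 ≤ b) (a : Fin b) {s : ℝ} (hs : |s| ≤ 1) :
    (#{x : Fin n → Fin b | s * ((1 / b + s) * n) ≤ s * #{i | x i = a}} : ℝ)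
      ≤ b ^ n * exp (-(s ^ 2 * n) / 2) := by
  have hb' : (2 : ℝ) ≤ b := by exact_mod_cast hb
  have hmgf : ∑ x : Fin n → Fin b, exp (s * #{i | x i = a}) = ((b : ℝ) - 1 + exp s) ^ n := by
    simp_rw [mul_comm s, exp_nat_mul, sum_pow_card_filter_eq, Fintype.card_fin]
  calc (#{x : Fin n → Fin b | s * ((1 / b + s) * n) ≤ s * #{i | x i = a}} : ℝ)
      ≤ exp (-(s * ((1 / b + s) * n))) * ((b : ℝ) - 1 + exp s) ^ n := by
        rw [← hmgf]
        exact card_filter_le_exp_neg_mul_sum_exp _ _ _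
    _ ≤ exp (-(s * ((1 / b + s) * n))) * (b * exp (s / b + s ^ 2 / 2)) ^ n := by
        gcongr
        · linarith [exp_pos s]
        · exact sub_one_add_exp_le hb' hs
    _ = b ^ n * exp (-(s ^ 2 * n) / 2) := by
        rw [mul_pow, ← exp_nat_mul, mul_left_comm, ← exp_add]
        congr 2
        ring

theorem exists_lt_abs_of_lt_simpleDisc {b : ℕ} (hb : 0 < b) {u : List ℕ} {ε : ℝ}
    (h : ε < simpleDisc b u) : ∃ d < b, ε < |(u.count d : ℝ) / u.length - 1 / b| := by
  obtain ⟨_, ⟨d, hd, rfl⟩, hlt⟩ := exists_lt_of_lt_csSup (Set.Nonempty.image _ ⟨0, hb⟩) h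
  exact ⟨d, hd, hlt⟩

theorem exists_deviation_of_lt_simpleDisc {n b : ℕ} (hn : 0 < n) (hb : 0 < b) {ε : ℝ}
    (hε : 0 ≤ ε) {x : Fin n → Fin b} (h : ε < simpleDisc b (List.ofFn fun j => (x j : ℕ))) :
    ∃ a : Fin b, ∃ s, (s = ε ∨ s = -ε) ∧ s * ((1 / b + s) * n) ≤ s * #{i | x i = a} := by
  have hn' : (0 : ℝ) < n := by exact_mod_cast hn
  obtain ⟨d, hd, hlt⟩ := exists_lt_abs_of_lt_simpleDisc hb h
  have hcount : ((List.ofFn fun j => (x j : ℕ)).count d : ℝ) = #{i | x i = ⟨d, hd⟩} := by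
    simp [List.count_ofFn_eq_card_filter, Fin.ext_iff]
  rw [hcount, List.length_ofFn] at hlt
  refine ⟨⟨d, hd⟩, ?_⟩
  rcases lt_abs.1 hlt with hup | hlow
  · refine ⟨ε, .inl rfl, mul_le_mul_of_nonneg_left ?_ hε⟩
    rw [lt_sub_iff_add_lt, lt_div_iff₀ hn'] at hup
    linarith
  · refine ⟨-ε, .inr rfl, mul_le_mul_of_nonpos_left ?_ (neg_nonpos.2 hε)⟩
    rw [neg_sub, lt_sub_iff_add_lt', ← lt_sub_iff_add_lt, div_lt_iff₀ hn'] at hlow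
    linarith

theorem card_filter_lt_simpleDisc_le {n b : ℕ} (hn : 0 < n) (hb : 2 ≤ b) {ε : ℝ} (hε : 0 ≤ ε)
    (hε1 : ε ≤ 1) :
    (#{x : Fin n → Fin b | ε < simpleDisc b (List.ofFn fun j => (x j : ℕ))} : ℝ)
      ≤ 2 * b * exp (-(ε ^ 2 * n) / 2) * b ^ n := by
  set deviating : ℝ → Fin b → Finset (Fin n → Fin b) :=
    fun s a => {x | s * ((1 / b + s) * n) ≤ s * #{i | x i = a}}
  have hsub : ({x | ε < simpleDisc b (List.ofFn fun j => (x j : ℕ))} : Finset (Fin n → Fin b))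
      ⊆ univ.biUnion fun a => deviating ε a ∪ deviating (-ε) a := by
    intro x hx
    obtain ⟨a, s, rfl | rfl, hdev⟩ :=
      exists_deviation_of_lt_simpleDisc hn (by omega) hε (mem_filter.1 hx).2
    · exact mem_biUnion.2 ⟨a, mem_univ _, mem_union_left _ (mem_filter.2 ⟨mem_univ _, hdev⟩)⟩
    · exact mem_biUnion.2 ⟨a, mem_univ _, mem_union_right _ (mem_filter.2 ⟨mem_univ _, hdev⟩)⟩
  have hs : |ε| ≤ 1 := abs_le.2 ⟨by linarith, hε1⟩
  calc (#{x : Fin n → Fin b | ε < simpleDisc b (List.ofFn fun j => (x j : ℕ))} : ℝ)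
      ≤ ∑ a : Fin b, ((#(deviating ε a) : ℝ) + #(deviating (-ε) a)) := by
        exact_mod_cast (card_le_card hsub).trans
          (card_biUnion_le.trans (sum_le_sum fun a _ => card_union_le _ _))
    _ ≤ ∑ _a : Fin b, 2 * exp (-(ε ^ 2 * n) / 2) * b ^ n := by
        gcongr with a
        have hup := card_deviation_le n hb a hs
        have hlow := card_deviation_le n hb a (s := -ε) (by rwa [abs_neg])
        rw [neg_sq] at hlow
        linarith
    _ = 2 * b * exp (-(ε ^ 2 * n) / 2) * b ^ n := by
        rw [sum_const, card_univ, Fintype.card_fin, nsmul_eq_mul]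
        ring

theorem two_mul_mul_exp_lt {t ε δ n : ℝ} (ht : 0 < t) (hδ : 0 < δ) (hn : 0 ≤ n)
    (hεn : -log (δ / (2 * t)) * 6 / ε ^ 2 < n) (hε : 0 < ε) :
    2 * t * exp (-(ε ^ 2 * n) / 2) < δ := by
  have hlog : -(ε ^ 2 * n) / 6 < log (δ / (2 * t)) := by
    rw [div_lt_iff₀ (by positivity)] at hεn
    linarith
  have hexp : exp (-(ε ^ 2 * n) / 2) < δ / (2 * t) :=
    calc exp (-(ε ^ 2 * n) / 2) ≤ exp (-(ε ^ 2 * n) / 6) :=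
          exp_le_exp.2 (by linarith [show 0 ≤ ε ^ 2 * n by positivity])
      _ < δ / (2 * t) := by
          rwa [← exp_lt_exp, exp_log (by positivity)] at hlog
  rwa [lt_div_iff₀' (by positivity)] at hexp

theorem fraction_of_large_discrepancy_blocks_lt_general
    (t : ℕ) (ε δ : ℝ) (hε : 0 < ε) (hεt : ε ≤ 1 / (t : ℝ))
    (hδ : 0 < δ) (k : ℤ)
    (hk₁ : (k : ℝ) > max ((⌈6 / ε⌉ : ℤ) : ℝ) (-Real.log (δ / (2 * (t : ℝ))) * 6 / ε ^ 2))
    (b : ℕ) (hb : 2 ≤ b) (hbt : b ≤ t) (k' : ℕ) (hk' : k ≤ (k' : ℤ)) :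
    (((Finset.univ : Finset (Fin k' → Fin b)).filter fun x =>
        ε < simpleDisc b (List.ofFn fun j => ((x j : ℕ)))).card : ℝ) < δ * (b : ℝ) ^ k' := by
  have hbt' : (b : ℝ) ≤ t := by exact_mod_cast hbt
  have ht : (1 : ℝ) ≤ t := by linarith [show (2 : ℝ) ≤ b by exact_mod_cast hb]
  have hkk' : (k : ℝ) ≤ k' := by exact_mod_cast hk'
  have hk'pos : (0 : ℝ) < k' :=
    calc (0 : ℝ) < 6 / ε := by positivity
      _ ≤ ⌈6 / ε⌉ := Int.le_ceil _
      _ < k' := ((le_max_left _ _).trans_lt hk₁).trans_le hkk'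
  have hε1 : ε ≤ 1 := hεt.trans (div_le_one_of_le₀ ht (by positivity))
  calc _ ≤ 2 * b * exp (-(ε ^ 2 * k') / 2) * b ^ k' :=
        card_filter_lt_simpleDisc_le (by exact_mod_cast hk'pos) hb hε.le hε1
    _ ≤ 2 * t * exp (-(ε ^ 2 * k') / 2) * b ^ k' := by gcongr
    _ < δ * b ^ k' := by
        gcongr
        exact two_mul_mul_exp_lt (by linarith) hδ hk'pos.le
          (((le_max_right _ _).trans_lt hk₁).trans_le hkk') hε

/-- Let `t ≥ 2`, let `0 < ε ≤ 1/t` and `0 < δ < 1`, and let `k` be the least integer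
greater than `max(⌈6/ε⌉, −ln(δ/(2t))·6/ε²)`.  Then for every base `b` with `2 ≤ b ≤ t`
and every `k' ≥ k`, the number of blocks `x` of length `k'` in base `b` with
`D(x,b) > ε` is less than `δ · b^{k'}`. -/
theorem fraction_of_large_discrepancy_blocks_lt
    (t : ℕ) (ht : 2 ≤ t) (ε δ : ℝ) (hε : 0 < ε) (hεt : ε ≤ 1 / (t : ℝ))
    (hδ : 0 < δ) (hδ1 : δ < 1) (k : ℤ)
    (hk₁ : (k : ℝ) > max ((⌈6 / ε⌉ : ℤ) : ℝ) (-Real.log (δ / (2 * (t : ℝ))) * 6 / ε ^ 2))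
    (hk₂ : ∀ j : ℤ,
      (j : ℝ) > max ((⌈6 / ε⌉ : ℤ) : ℝ) (-Real.log (δ / (2 * (t : ℝ))) * 6 / ε ^ 2) → k ≤ j)
    (b : ℕ) (hb : 2 ≤ b) (hbt : b ≤ t) (k' : ℕ) (hk' : k ≤ (k' : ℤ)) :
    (((Finset.univ : Finset (Fin k' → Fin b)).filter fun x =>
        ε < simpleDisc b (List.ofFn fun j => ((x j : ℕ)))).card : ℝ) < δ * (b : ℝ) ^ k' :=
  fraction_of_large_discrepancy_blocks_lt_general t ε δ hε hεt hδ k hk₁ b hb hbt k' hk'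
end

section
/- For every base b ≥ 2, the set of real numbers that are normal to base b is Π⁰₃ in the Borel hierarchy; that is, there is a family (C_{n,m})_{n,m∈ℕ} of closed subsets of ℝ such that {R ∈ ℝ : R is normal to base b} = ⋂_n ⋃_m C_{n,m}. -/
open Filter

/-- The `(i+1)`-st digit (for `i = 0, 1, 2, ...`) of the base-`b` expansion of the
fractional part of a real `R`.  For `R ∈ [0,1)` this is the unique expansion of `R`
whose digits are not eventually all equal to `b - 1`; for general `R`, normality is
defined via the fractional part. -/
noncomputable def rdigit (b : ℕ) (R : ℝ) (i : ℕ) : ℕ :=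
  (⌊Int.fract R * (b : ℝ) ^ (i + 1)⌋).toNat % b

/-- The block consisting of the first `n` digits of the base-`b` expansion of `R`. -/
noncomputable def rdigits (b : ℕ) (R : ℝ) (n : ℕ) : List ℕ := (List.range n).map (rdigit b R)

/-- `R` is simply normal to base `b`: every digit `d < b` occurs with limiting
frequency `1/b` in the base-`b` expansion of `R`. -/
def SimplyNormal (b : ℕ) (R : ℝ) : Prop :=
  ∀ d < b, Tendsto (fun n => ((rdigits b R n).count d : ℝ) / n) atTop (nhds (1 / (b : ℝ)))

/-- `R` is normal to base `b`: it is simply normal to base `b ^ ℓ` for every `ℓ ≥ 1`. -/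
def NormalBase (b : ℕ) (R : ℝ) : Prop := ∀ ℓ : ℕ, 1 ≤ ℓ → SimplyNormal (b ^ ℓ) R

/-- `R` is absolutely normal: normal to every base `b ≥ 2`. -/
def AbsolutelyNormal (R : ℝ) : Prop := ∀ b : ℕ, 2 ≤ b → NormalBase b R

/-- `R` is absolutely abnormal: normal to no base `b ≥ 2`. -/
def AbsolutelyAbnormal (R : ℝ) : Prop := ∀ b : ℕ, 2 ≤ b → ¬ NormalBase b R

/-!
Off the `b`-adic rationals every base-`b ^ ℓ` digit, hence every digit frequency, is locally
constant; so at such a point `R` the condition `|freq_n R - b ^ (-ℓ)| ≤ ε` holds iff `R` lies in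
the closure of the set where it holds. Normality therefore amounts to not being `b`-adic (a
countable intersection of open sets; `b`-adic rationals end in zeros, so they are not even
simply normal) together with countably many conditions `∃ M, ∀ n ≥ M, R ∈ F n` with `F n`
closed, each of which is an `F_σ` condition.
-/

open Set Topology

section Borel

variable {X : Type*} [TopologicalSpace X]

/-- The Borel class `Π⁰₃`. -/
def IsFσδ (S : Set X) : Prop :=
  ∃ C : ℕ → ℕ → Set X, (∀ n m, IsClosed (C n m)) ∧ S = ⋂ n, ⋃ m, C n m

theorem isFσδ_iUnion_of_isClosed {C : ℕ → Set X} (hC : ∀ m, IsClosed (C m)) :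
    IsFσδ (⋃ m, C m) :=
  ⟨fun _ => C, fun _ => hC, (iInter_const _).symm⟩

theorem IsFσδ.iInter {ι : Sort*} [Countable ι] {S : ι → Set X} (hS : ∀ i, IsFσδ (S i)) :
    IsFσδ (⋂ i, S i) := by
  choose C hC hCS using hS
  rcases isEmpty_or_nonempty ι with hι | hι
  · refine ⟨fun _ _ => univ, fun _ _ => isClosed_univ, ?_⟩
    simp only [iInter_of_empty, iUnion_const, iInter_const]
  obtain ⟨g, hg⟩ := exists_surjective_nat ι
  refine ⟨fun n => C (g n.unpair.1) n.unpair.2, fun n => hC _ _, ?_⟩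
  ext x
  simp only [hCS, mem_iInter, mem_iUnion]
  constructor
  · exact fun h n => h _ _
  · intro h i j
    obtain ⟨a, rfl⟩ := hg i
    simpa using h (Nat.pair a j)

theorem IsFσδ.inter {S T : Set X} (hS : IsFσδ S) (hT : IsFσδ T) : IsFσδ (S ∩ T) := by
  rw [inter_eq_iInter]
  exact .iInter fun i => by cases i <;> assumption

end Borel

theorem IsOpen.isFσδ {X : Type*} [PseudoEMetricSpace X] {U : Set X} (hU : IsOpen U) :
    IsFσδ U := by
  obtain ⟨F, hF, -, rfl, -⟩ := hU.exists_iUnion_isClosed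
  exact isFσδ_iUnion_of_isClosed hF

theorem Int.floor_eventuallyEq {α : Type*} [Ring α] [LinearOrder α] [IsStrictOrderedRing α]
    [FloorRing α] [TopologicalSpace α] [OrderTopology α] {x : α} (hx : ∀ z : ℤ, x ≠ z) :
    ∀ᶠ y in 𝓝 x, ⌊y⌋ = ⌊x⌋ := by
  have hmem : x ∈ Ioo (⌊x⌋ : α) (⌊x⌋ + 1) :=
    ⟨(Int.floor_le x).lt_of_ne (hx _).symm, Int.lt_floor_add_one x⟩
  filter_upwards [isOpen_Ioo.mem_nhds hmem] with y hy
  exact Int.floor_eq_iff.mpr ⟨hy.1.le, hy.2⟩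

theorem Int.toNat_mod_eq_zero_of_dvd {m : ℤ} {b : ℕ} (h : (b : ℤ) ∣ m) : m.toNat % b = 0 := by
  refine Nat.mod_eq_zero_of_dvd (Int.natCast_dvd_natCast.mp ?_)
  rcases le_total m 0 with hm | hm
  · simp [Int.toNat_of_nonpos hm]
  · rwa [Int.toNat_of_nonneg hm]

theorem mem_closure_preimage_iff_of_eventuallyEq {X Y : Type*} [TopologicalSpace X] {f : X → Y}
    {x : X} (hf : ∀ᶠ y in 𝓝 x, f y = f x) {s : Set Y} : x ∈ closure (f ⁻¹' s) ↔ f x ∈ s := by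
  refine ⟨fun hx => ?_, fun hx => subset_closure hx⟩
  obtain ⟨y, hyx, hys⟩ := mem_closure_iff_nhds.mp hx _ hf
  exact hyx ▸ hys

def IsAdicRational (b : ℕ) (R : ℝ) : Prop := ∃ (k : ℕ) (z : ℤ), R * (b : ℝ) ^ k = z

theorem IsAdicRational.of_pow {b ℓ : ℕ} {R : ℝ} (h : IsAdicRational (b ^ ℓ) R) :
    IsAdicRational b R := by
  obtain ⟨k, z, hz⟩ := h
  exact ⟨ℓ * k, z, by rwa [pow_mul, ← Nat.cast_pow]⟩

theorem isFσδ_setOf_not_isAdicRational (b : ℕ) : IsFσδ {R : ℝ | ¬ IsAdicRational b R} := by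
  have : {R : ℝ | ¬ IsAdicRational b R} = ⋂ (k : ℕ) (z : ℤ), {R | R * (b : ℝ) ^ k ≠ z} := by
    ext R
    simp [IsAdicRational]
  rw [this]
  exact .iInter fun k => .iInter fun z =>
    (isOpen_ne_fun (continuous_mul_const _) continuous_const).isFσδ

section Digits

variable {b : ℕ} {R : ℝ}

theorem rdigits_succ (b : ℕ) (R : ℝ) (n : ℕ) :
    rdigits b R (n + 1) = rdigits b R n ++ [rdigit b R n] := by
  simp [rdigits, List.range_succ]

theorem rdigit_eq_floor_sub (b : ℕ) (R : ℝ) (i : ℕ) :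
    rdigit b R i = (⌊R * (b : ℝ) ^ (i + 1)⌋ - ⌊R⌋ * (b : ℤ) ^ (i + 1)).toNat % b := by
  rw [rdigit, ← Int.floor_sub_intCast, Int.fract, sub_mul]
  push_cast
  rfl

theorem rdigit_eq_zero_of_mul_pow_eq {k : ℕ} {z : ℤ} (h : R * (b : ℝ) ^ k = z) {i : ℕ}
    (hi : k ≤ i) : rdigit b R i = 0 := by
  have hfloor : ⌊R * (b : ℝ) ^ (i + 1)⌋ = z * (b : ℤ) ^ (i + 1 - k) := by
    have hsplit : (b : ℝ) ^ (i + 1) = b ^ k * b ^ (i + 1 - k) := by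
      rw [← pow_add]; congr 1; omega
    rw [hsplit, ← mul_assoc, h]
    exact_mod_cast Int.floor_intCast _
  rw [rdigit_eq_floor_sub, hfloor]
  apply Int.toNat_mod_eq_zero_of_dvd
  exact dvd_sub (dvd_mul_of_dvd_right (dvd_pow_self _ (by omega)) _)
    (dvd_mul_of_dvd_right (dvd_pow_self _ (by omega)) _)

theorem not_simplyNormal_of_isAdicRational (hb : 2 ≤ b) (h : IsAdicRational b R) :
    ¬ SimplyNormal b R := by
  obtain ⟨k, z, hz⟩ := h
  intro hR
  -- all digits from the `k`-th on vanish, so the digit `1` occurs only finitely often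
  have hcount : ∀ n ≥ k, (rdigits b R n).count 1 = (rdigits b R k).count 1 := by
    intro n hn
    induction n, hn using Nat.le_induction with
    | base => rfl
    | succ n hkn ih => simp [rdigits_succ, rdigit_eq_zero_of_mul_pow_eq hz hkn, ih]
  have hzero : Tendsto (fun n : ℕ => ((rdigits b R n).count 1 : ℝ) / n) atTop (𝓝 0) :=
    (tendsto_const_div_atTop_nhds_zero_nat ((rdigits b R k).count 1 : ℝ)).congr' <|
      (eventually_ge_atTop k).mono fun n hn => by simp only [hcount n hn]
  have hb0 : (1 / (b : ℝ)) ≠ 0 := by positivity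
  exact hb0 (tendsto_nhds_unique (hR 1 (by omega)) hzero)

theorem rdigit_eventuallyEq (h : ¬ IsAdicRational b R) (i : ℕ) :
    ∀ᶠ R' in 𝓝 R, rdigit b R' i = rdigit b R i := by
  have hR : ∀ z : ℤ, R ≠ z := fun z hz => h ⟨0, z, by simpa⟩
  have hRb : ∀ z : ℤ, R * (b : ℝ) ^ (i + 1) ≠ z := fun z hz => h ⟨i + 1, z, hz⟩
  filter_upwards [Int.floor_eventuallyEq hR,
    ((continuous_mul_const _).tendsto R).eventually (Int.floor_eventuallyEq hRb)] with R' h1 h2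
  rw [rdigit_eq_floor_sub, rdigit_eq_floor_sub, h1, h2]

theorem rdigits_eventuallyEq (h : ¬ IsAdicRational b R) (n : ℕ) :
    ∀ᶠ R' in 𝓝 R, rdigits b R' n = rdigits b R n := by
  filter_upwards [(Finset.eventually_all _).mpr fun i (_ : i ∈ Finset.range n) =>
    rdigit_eventuallyEq h i] with R' hR'
  exact List.map_congr_left fun i hi => hR' i (by simpa using hi)

noncomputable def digitFreq (b d n : ℕ) (R : ℝ) : ℝ := ((rdigits b R n).count d : ℝ) / n

theorem simplyNormal_iff_of_not_isAdicRational (h : ¬ IsAdicRational b R) :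
    SimplyNormal b R ↔ ∀ d < b, ∀ k : ℕ, ∃ M, ∀ n ≥ M,
      R ∈ closure (digitFreq b d n ⁻¹' Metric.closedBall (1 / (b : ℝ)) (1 / (k + 1))) := by
  refine forall₂_congr fun d _ => ?_
  rw [atTop_basis.tendsto_iff Metric.nhds_basis_closedBall_inv_nat_succ]
  refine forall_congr' fun k => ?_
  simp only [true_implies, true_and, mem_Ici]
  refine exists_congr fun M => forall₂_congr fun n _ => ?_
  rw [mem_closure_preimage_iff_of_eventuallyEq]
  · rfl
  · filter_upwards [rdigits_eventuallyEq h n] with R' hR'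
    simp only [digitFreq, hR']

end Digits

theorem setOf_normalBase_eq {b : ℕ} (hb : 2 ≤ b) :
    {R : ℝ | NormalBase b R} = {R | ¬ IsAdicRational b R} ∩
      ⋂ (ℓ : ℕ) (_ : 1 ≤ ℓ) (d : ℕ) (_ : d < b ^ ℓ) (k : ℕ), ⋃ M, ⋂ (n : ℕ) (_ : M ≤ n),
        closure (digitFreq (b ^ ℓ) d n ⁻¹'
          Metric.closedBall (1 / ((b ^ ℓ : ℕ) : ℝ)) (1 / (k + 1))) := by
  ext R
  by_cases hR : IsAdicRational b R
  · have : ¬ NormalBase b R := fun hN =>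
      not_simplyNormal_of_isAdicRational hb hR (by simpa using hN 1 le_rfl)
    simp [hR, this]
  · simp only [mem_ofPred_eq, mem_inter_iff, hR, not_false_eq_true, true_and, mem_iInter,
      mem_iUnion, NormalBase,
      simplyNormal_iff_of_not_isAdicRational (mt IsAdicRational.of_pow hR)]

/-- For every base `b ≥ 2`, the set of real numbers normal to base `b` is `Π⁰₃` in the
Borel hierarchy: it is a countable intersection of countable unions of closed sets. -/
theorem normalBase_pi03 (b : ℕ) (hb : 2 ≤ b) :
    ∃ C : ℕ → ℕ → Set ℝ, (∀ n m, IsClosed (C n m)) ∧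
      {R : ℝ | NormalBase b R} = ⋂ n, ⋃ m, C n m := by
  show IsFσδ _
  rw [setOf_normalBase_eq hb]
  exact (isFσδ_setOf_not_isAdicRational b).inter <|
    .iInter fun ℓ => .iInter fun _ => .iInter fun d => .iInter fun _ => .iInter fun k =>
      isFσδ_iUnion_of_isClosed fun M => isClosed_biInter fun n _ => isClosed_closure
end

section
/- The set of absolutely abnormal real numbers is Π⁰₄ in the Borel hierarchy; that is, there is a family (U_{n,m,k})_{n,m,k∈ℕ} of open subsets of ℝ such that {R ∈ ℝ : R is absolutely abnormal} = ⋂_n ⋃_m ⋂_k U_{n,m,k}. -/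
open Filter

/-!
Fix a base `b`. A real `R` is not normal to base `b` iff for some block length `ℓ`, digit `d`
and `j`, the frequency of `d` among the first `t` base-`b ^ ℓ` digits is at least `1 / (j + 1)`
away from `b ^ (-ℓ)` for infinitely many `t`, i.e. `R` lies in a `limsup` of sets defined by
finitely many digits. The first `t` digits of `R` only depend on `⌊R * b ^ (ℓ t)⌋`, so off the
countable set of `b`-adic rationals these sets are open. Hence the set of reals not normal to
base `b` is the union of a countable set and countably many `Gδ` sets, which is `Σ⁰₃`, and
intersecting over all bases gives `Π⁰₄`.
-/

open Topology Set

section GδSigma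

variable {X : Type*} [TopologicalSpace X]

def IsGδσ (s : Set X) : Prop := ∃ G : ℕ → Set X, (∀ n, IsGδ (G n)) ∧ s = ⋃ n, G n

theorem IsGδ.isGδσ {s : Set X} (hs : IsGδ s) : IsGδσ s :=
  ⟨fun _ => s, fun _ => hs, (iUnion_const s).symm⟩

theorem isGδσ_iUnion {ι : Sort*} [Countable ι] {s : ι → Set X} (hs : ∀ i, IsGδσ (s i)) :
    IsGδσ (⋃ i, s i) := by
  choose G hG hsG using hs
  cases isEmpty_or_nonempty ι with
  | inl _ => exact ⟨fun _ => ∅, fun _ => isOpen_empty.isGδ, by simp⟩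
  | inr _ =>
    obtain ⟨f, hf⟩ := exists_surjective_nat ι
    refine ⟨fun n : ℕ => G (f n.unpair.1) n.unpair.2, fun n => hG _ _, ?_⟩
    calc ⋃ i, s i = ⋃ i, ⋃ m, G i m := by simp only [hsG]
      _ = ⋃ k, ⋃ m, G (f k) m := (hf.iUnion_comp fun i => ⋃ m, G i m).symm
      _ = ⋃ n : ℕ, G (f n.unpair.1) n.unpair.2 := by
        rw [Nat.surjective_unpair.iUnion_comp (fun p : ℕ × ℕ => G (f p.1) p.2), iUnion_prod']

theorem IsGδσ.union {s t : Set X} (hs : IsGδσ s) (ht : IsGδσ t) : IsGδσ (s ∪ t) := by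
  rw [union_eq_iUnion]
  exact isGδσ_iUnion fun b => by cases b <;> assumption

theorem Set.Countable.isGδσ [T1Space X] [FirstCountableTopology X] {s : Set X}
    (hs : s.Countable) : IsGδσ s := by
  have := hs.to_subtype
  rw [← iUnion_of_singleton_coe s]
  exact isGδσ_iUnion fun x => (IsGδ.singleton (x : X)).isGδσ

theorem isGδ_limsup_atTop {s : ℕ → Set X} (hs : ∀ n, IsOpen (s n)) :
    IsGδ (limsup s atTop) := by
  rw [limsup_eq_iInf_iSup_of_nat]
  exact .iInter_of_isOpen fun n => isOpen_biUnion fun i _ => hs i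

end GδSigma

theorem isOpen_inter_setOf_notMem_range_intCast {X : Type*} [TopologicalSpace X] {f : X → ℝ}
    (hf : Continuous f) {s : Set X} (hs : ∀ x y, ⌊f x⌋ = ⌊f y⌋ → x ∈ s → y ∈ s) :
    IsOpen (s ∩ {x | f x ∉ range ((↑) : ℤ → ℝ)}) := by
  rw [isOpen_iff_mem_nhds]
  rintro x ⟨hxs, hx⟩
  have hlt : (⌊f x⌋ : ℝ) < f x := (Int.floor_le _).lt_of_ne fun h => hx ⟨_, h⟩
  filter_upwards [hf.continuousAt (Ioo_mem_nhds hlt (Int.lt_floor_add_one _))]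
    with y ⟨hy₁, hy₂⟩
  have hfloor : ⌊f x⌋ = ⌊f y⌋ := (Int.floor_eq_iff.2 ⟨hy₁.le, hy₂⟩).symm
  refine ⟨hs x y hfloor hxs, ?_⟩
  rintro ⟨m, hm⟩
  rw [← hm] at hy₁ hy₂
  have h₁ : ⌊f x⌋ < m := by exact_mod_cast hy₁
  have h₂ : m < ⌊f x⌋ + 1 := by exact_mod_cast hy₂
  omega

theorem floor_mul_pow_eq_floor_mul_pow_div (R : ℝ) {b : ℕ} (hb : b ≠ 0) {j t : ℕ} (h : j ≤ t) :
    ⌊R * b ^ j⌋ = ⌊R * b ^ t⌋ / (b ^ (t - j) : ℕ) := by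
  have : R * b ^ j = R * b ^ t / (b ^ (t - j) : ℕ) := by
    rw [eq_div_iff (by positivity), Nat.cast_pow, mul_assoc, ← pow_add, Nat.add_sub_cancel' h]
  rw [this, Int.floor_div_natCast]

theorem rdigit_eq_of_floor_eq {b : ℕ} {R R' : ℝ} {t i : ℕ} (hi : i < t)
    (h : ⌊R * b ^ t⌋ = ⌊R' * b ^ t⌋) : rdigit b R i = rdigit b R' i := by
  rcases eq_or_ne b 0 with rfl | hb
  · simp [rdigit]
  have hfract (x : ℝ) : ⌊Int.fract x * b ^ (i + 1)⌋
      = ⌊x * b ^ t⌋ / (b ^ (t - (i + 1)) : ℕ) - ⌊x * b ^ t⌋ / (b ^ (t - 0) : ℕ) * b ^ (i + 1) := by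
    rw [← floor_mul_pow_eq_floor_mul_pow_div x hb hi, ← floor_mul_pow_eq_floor_mul_pow_div x hb
      (Nat.zero_le t), pow_zero, mul_one, Int.fract, sub_mul, ← Int.floor_sub_intCast]
    push_cast; rfl
  rw [rdigit, rdigit, hfract, hfract, h]

theorem rdigits_eq_of_floor_eq {b : ℕ} {R R' : ℝ} {t : ℕ} (h : ⌊R * b ^ t⌋ = ⌊R' * b ^ t⌋) :
    rdigits b R t = rdigits b R' t :=
  List.map_congr_left fun _ hi => rdigit_eq_of_floor_eq (List.mem_range.1 hi) h

theorem not_tendsto_iff_exists_frequently_le_dist {α β : Type*} [PseudoMetricSpace α]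
    {l : Filter β} {u : β → α} {a : α} :
    ¬ Tendsto u l (𝓝 a) ↔ ∃ j : ℕ, ∃ᶠ t in l, 1 / ((j : ℝ) + 1) ≤ dist (u t) a := by
  rw [Metric.tendsto_nhds]
  push Not
  constructor
  · rintro ⟨ε, hε, h⟩
    obtain ⟨j, hj⟩ := exists_nat_one_div_lt hε
    exact ⟨j, h.mono fun t ht => hj.le.trans ht⟩
  · rintro ⟨j, h⟩
    exact ⟨_, Nat.one_div_pos_of_nat, h⟩

theorem not_normalBase_iff {b : ℕ} {R : ℝ} :
    ¬ NormalBase b R ↔ ∃ ℓ ≥ 1, ∃ d < b ^ ℓ, ∃ j : ℕ, ∃ᶠ t in atTop,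
      1 / ((j : ℝ) + 1) ≤ dist (((rdigits (b ^ ℓ) R t).count d : ℝ) / t) (1 / (b ^ ℓ : ℕ)) := by
  simp only [NormalBase, SimplyNormal, not_forall, not_tendsto_iff_exists_frequently_le_dist,
    exists_prop]

def adicRationals (b : ℕ) : Set ℝ := {R | ∃ t : ℕ, R * b ^ t ∈ range ((↑) : ℤ → ℝ)}

theorem countable_adicRationals {b : ℕ} (hb : b ≠ 0) : (adicRationals b).Countable := by
  refine (countable_range fun p : ℤ × ℕ => (p.1 : ℝ) / b ^ p.2).mono ?_
  rintro R ⟨t, m, hm⟩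
  exact ⟨(m, t), by simp only [hm]; field_simp⟩

/-- Removing the points with `R * B ^ t ∈ ℤ`, where the first `t` base-`B` digits jump, makes
this condition on finitely many digits open. -/
def digitDeviationSet (B d j t : ℕ) : Set ℝ :=
  {R | 1 / ((j : ℝ) + 1) ≤ dist (((rdigits B R t).count d : ℝ) / t) (1 / B)} ∩
    {R | R * B ^ t ∉ range ((↑) : ℤ → ℝ)}

theorem isOpen_digitDeviationSet (B d j t : ℕ) : IsOpen (digitDeviationSet B d j t) :=
  isOpen_inter_setOf_notMem_range_intCast (continuous_mul_const _) fun _ _ h hx => by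
    rwa [mem_ofPred_eq, ← rdigits_eq_of_floor_eq h]

theorem setOf_not_normalBase_eq (b : ℕ) :
    {R | ¬ NormalBase b R} = ({R | ¬ NormalBase b R} ∩ adicRationals b) ∪
      ⋃ ℓ ≥ 1, ⋃ d < b ^ ℓ, ⋃ j : ℕ, limsup (digitDeviationSet (b ^ ℓ) d j) atTop := by
  ext R
  simp only [mem_union, mem_inter_iff, mem_ofPred_eq, mem_iUnion, mem_limsup_iff_frequently_mem,
    exists_prop, not_normalBase_iff, digitDeviationSet]
  by_cases hR : R ∈ adicRationals b
  · constructor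
    · exact fun h => .inl ⟨h, hR⟩
    · rintro (⟨h, -⟩ | ⟨ℓ, hℓ, d, hd, j, h⟩)
      · exact h
      · exact ⟨ℓ, hℓ, d, hd, j, h.mono fun t ht => ht.1⟩
  · have hnotint (ℓ t : ℕ) : R * ((b ^ ℓ : ℕ) : ℝ) ^ t ∉ range ((↑) : ℤ → ℝ) := fun h =>
      hR ⟨ℓ * t, by rwa [Nat.cast_pow, ← pow_mul] at h⟩
    simp only [hR, and_false, false_or, hnotint, not_false_eq_true, and_true]

theorem isGδσ_setOf_not_normalBase {b : ℕ} (hb : b ≠ 0) : IsGδσ {R | ¬ NormalBase b R} := by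
  rw [setOf_not_normalBase_eq]
  refine ((countable_adicRationals hb).mono inter_subset_right).isGδσ.union ?_
  exact isGδσ_iUnion fun ℓ => isGδσ_iUnion fun _ => isGδσ_iUnion fun d => isGδσ_iUnion fun _ =>
    isGδσ_iUnion fun j => (isGδ_limsup_atTop (isOpen_digitDeviationSet _ d j)).isGδσ

theorem setOf_absolutelyAbnormal_eq_iInter :
    {R | AbsolutelyAbnormal R} = ⋂ n : ℕ, {R | ¬ NormalBase (n + 2) R} := by
  ext R
  simp only [mem_ofPred_eq, mem_iInter, AbsolutelyAbnormal]
  refine ⟨fun h n => h _ (by omega), fun h b hb => ?_⟩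
  obtain ⟨n, rfl⟩ := Nat.exists_eq_add_of_le' hb
  exact h n

/-- The set of absolutely abnormal real numbers is `Π⁰₄` in the Borel hierarchy: it is a
countable intersection of countable unions of countable intersections of open sets. -/
theorem absolutelyAbnormal_pi04 :
    ∃ U : ℕ → ℕ → ℕ → Set ℝ, (∀ n m k, IsOpen (U n m k)) ∧
      {R : ℝ | AbsolutelyAbnormal R} = ⋂ n, ⋃ m, ⋂ k, U n m k := by
  choose G hG hUnion using fun n : ℕ => isGδσ_setOf_not_normalBase (b := n + 2) (by omega)
  choose U hU hInter using fun n m => isGδ_iff_eq_iInter_nat.1 (hG n m)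
  refine ⟨U, hU, ?_⟩
  simp only [setOf_absolutelyAbnormal_eq_iInter, hUnion, hInter]
end

section
/- For every computable predicate C : ℕ⁺ × ℕ⁺ → Bool there is a computable infinite sequence f : ℕ → ℕ⁺ of positive integers such that: (i) every positive integer occurs in f, and for each x ≥ 1 the first occurrence of x+1 in f comes strictly after the first occurrence of x (so the subsequence of f's first occurrences enumerates ℕ⁺ in increasing order); (ii) if for every x the set {y : C(x,y)} is finite, then no positive integer occurs infinitely often in f; and (iii) if there is some x for which {y : C(x,y)} is infinite, then all but finitely many positive integers occur infinitely often in f. -/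
/-!
Even positions list `1, 2, 3, …` in order. Position `2n + 1` decodes `n` as a triple `(s, x, y)`
and shows `y` again when `C x s` holds with `1 ≤ x ≤ y`, and repeats `n + 1` otherwise. So `y`
recurs once for every witness `s` of a section `{s | C x s}` with `x ≤ y`: finitely often if all
sections are finite, and infinitely often for every `y ≥ x₀` if the section of `x₀` is infinite.
Since `y ≤ n`, the term at position `i` never exceeds `i / 2 + 1`, so the first occurrence of `x`
is at the even position `2 (x - 1)`.
-/

namespace FirstReduction

variable {C : ℕ → ℕ → Bool}

def revisit (C : ℕ → ℕ → Bool) (n : ℕ) : ℕ :=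
  bif decide (1 ≤ n.unpair.2.unpair.1 ∧ n.unpair.2.unpair.1 ≤ n.unpair.2.unpair.2 ∧
      1 ≤ n.unpair.1) && C n.unpair.2.unpair.1 n.unpair.1
    then n.unpair.2.unpair.2 else n + 1

def seq (C : ℕ → ℕ → Bool) (i : ℕ) : ℕ :=
  bif i.bodd then revisit C i.div2 else i.div2 + 1

theorem revisit_pair (s x y : ℕ) :
    revisit C (Nat.pair s (Nat.pair x y)) =
      if 1 ≤ x ∧ x ≤ y ∧ 1 ≤ s ∧ C x s then y else Nat.pair s (Nat.pair x y) + 1 := by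
  simp only [revisit, Nat.unpair_pair]
  by_cases h : 1 ≤ x ∧ x ≤ y ∧ 1 ≤ s <;> by_cases hC : C x s <;> simp_all

theorem revisit_pair_of_mem {s x y : ℕ} (hxy : 1 ≤ x ∧ x ≤ y) (hs : 1 ≤ s ∧ C x s) :
    revisit C (Nat.pair s (Nat.pair x y)) = y := by
  rw [revisit_pair, if_pos ⟨hxy.1, hxy.2, hs⟩]

theorem revisit_cases (n : ℕ) :
    revisit C n = n + 1 ∨ ∃ x ∈ Set.Icc 1 (revisit C n), ∃ s, (1 ≤ s ∧ C x s) ∧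
      Nat.pair s (Nat.pair x (revisit C n)) = n := by
  obtain ⟨s, x, y, rfl⟩ : ∃ s x y, Nat.pair s (Nat.pair x y) = n :=
    ⟨_, _, _, by rw [Nat.pair_unpair, Nat.pair_unpair]⟩
  rw [revisit_pair]
  split_ifs with h
  · exact Or.inr ⟨x, ⟨h.1, h.2.1⟩, s, h.2.2, rfl⟩
  · exact Or.inl rfl

theorem one_le_revisit (n : ℕ) : 1 ≤ revisit C n := by
  rcases revisit_cases (C := C) n with h | ⟨x, hx, -⟩
  · omega
  · exact hx.1.trans hx.2

theorem revisit_le (n : ℕ) : revisit C n ≤ n + 1 := by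
  rcases revisit_cases (C := C) n with h | ⟨x, -, s, -, hn⟩
  · omega
  · have := (Nat.right_le_pair x (revisit C n)).trans (Nat.right_le_pair s _)
    omega

theorem setOf_revisit_eq_subset (y : ℕ) :
    {n | revisit C n = y} ⊆ insert (y - 1)
      (⋃ x ∈ Set.Icc 1 y, (fun s => Nat.pair s (Nat.pair x y)) '' {s | 1 ≤ s ∧ C x s}) := by
  rintro n rfl
  rcases revisit_cases (C := C) n with h | ⟨x, hx, s, hs, hn⟩
  · exact Or.inl (by omega)
  · exact Or.inr (Set.mem_biUnion hx ⟨s, hs, hn⟩)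

theorem finite_setOf_revisit_eq (hfin : ∀ x, 1 ≤ x → {s | 1 ≤ s ∧ C x s}.Finite) (y : ℕ) :
    {n | revisit C n = y}.Finite :=
  (((Set.finite_Icc 1 y).biUnion fun x hx => (hfin x hx.1).image _).insert _).subset
    (setOf_revisit_eq_subset y)

theorem infinite_setOf_revisit_eq {x y : ℕ} (hxy : 1 ≤ x ∧ x ≤ y)
    (hinf : {s | 1 ≤ s ∧ C x s}.Infinite) : {n | revisit C n = y}.Infinite := by
  have hinj : Function.Injective fun s => Nat.pair s (Nat.pair x y) := fun s t h => by
    simpa using Nat.pair_eq_pair.mp h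
  refine (hinf.image hinj.injOn).mono ?_
  rintro _ ⟨s, hs, rfl⟩
  exact revisit_pair_of_mem hxy hs

theorem computable_revisit (hC : Computable₂ C) : Computable (revisit C) := by
  have hs : Primrec fun n : ℕ => n.unpair.1 := Primrec.fst.comp Primrec.unpair
  have hx : Primrec fun n : ℕ => n.unpair.2.unpair.1 :=
    Primrec.fst.comp (Primrec.unpair.comp (Primrec.snd.comp Primrec.unpair))
  have hy : Primrec fun n : ℕ => n.unpair.2.unpair.2 :=
    Primrec.snd.comp (Primrec.unpair.comp (Primrec.snd.comp Primrec.unpair))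
  have hcond : PrimrecPred fun n : ℕ => 1 ≤ n.unpair.2.unpair.1 ∧
      n.unpair.2.unpair.1 ≤ n.unpair.2.unpair.2 ∧ 1 ≤ n.unpair.1 :=
    (Primrec.nat_le.comp (Primrec.const 1) hx).and
      ((Primrec.nat_le.comp hx hy).and (Primrec.nat_le.comp (Primrec.const 1) hs))
  exact Computable.cond
    (Primrec.and.to_comp.comp hcond.decide.to_comp (hC.comp hx.to_comp hs.to_comp))
    hy.to_comp Computable.succ

theorem computable_seq (hC : Computable₂ C) : Computable (seq C) :=
  Computable.cond Computable.nat_bodd ((computable_revisit hC).comp Computable.nat_div2)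
    (Computable.succ.comp Computable.nat_div2)

theorem seq_two_mul (n : ℕ) : seq C (2 * n) = n + 1 := by
  simp [seq, Nat.bodd_mul, Nat.div2_val]

theorem seq_two_mul_add_one (n : ℕ) : seq C (2 * n + 1) = revisit C n := by
  simp [seq, Nat.bodd_mul, Nat.div2_val]

theorem seq_le_half_add_one (i : ℕ) : seq C i ≤ i / 2 + 1 := by
  obtain ⟨n, rfl | rfl⟩ := Nat.even_or_odd' i
  · rw [seq_two_mul]; omega
  · rw [seq_two_mul_add_one]; have := revisit_le (C := C) n; omega

theorem one_le_seq (i : ℕ) : 1 ≤ seq C i := by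
  obtain ⟨n, rfl | rfl⟩ := Nat.even_or_odd' i
  · rw [seq_two_mul]; omega
  · rw [seq_two_mul_add_one]; exact one_le_revisit n

theorem isLeast_setOf_seq_eq {x : ℕ} (hx : 1 ≤ x) : IsLeast {i | seq C i = x} (2 * (x - 1)) := by
  refine ⟨(seq_two_mul _).trans (by omega), fun i (hi : seq C i = x) => ?_⟩
  have := seq_le_half_add_one (C := C) i
  omega

theorem setOf_seq_eq_subset (x : ℕ) :
    {i | seq C i = x} ⊆ insert (2 * (x - 1)) ((2 * · + 1) '' {n | revisit C n = x}) := by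
  rintro i (hi : seq C i = x)
  obtain ⟨n, rfl | rfl⟩ := Nat.even_or_odd' i
  · rw [seq_two_mul] at hi
    exact Or.inl (by omega)
  · rw [seq_two_mul_add_one] at hi
    exact Or.inr ⟨n, hi, rfl⟩

theorem image_subset_setOf_seq_eq (x : ℕ) :
    (2 * · + 1) '' {n | revisit C n = x} ⊆ {i | seq C i = x} := by
  rintro _ ⟨n, hn, rfl⟩
  exact (seq_two_mul_add_one n).trans hn

end FirstReduction

open FirstReduction in
/-- For every computable predicate `C` on pairs of positive integers there is a
computable sequence `f` of positive integers such that: every positive integer occurs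
in `f` and the first occurrence of `x + 1` comes strictly after the first occurrence of
`x` (so the subsequence of first occurrences enumerates the positive integers in
increasing order); if `{y ≥ 1 : C x y}` is finite for every `x ≥ 1` then no positive
integer occurs infinitely often in `f`; and if `{y ≥ 1 : C x y}` is infinite for some
`x ≥ 1` then all but finitely many positive integers occur infinitely often in `f`. -/
theorem first_reduction (C : ℕ → ℕ → Bool) (hC : Computable₂ C) :
    ∃ f : ℕ → ℕ, Computable f ∧ (∀ i, 1 ≤ f i) ∧
      (∀ x : ℕ, 1 ≤ x → ∃ i, f i = x) ∧
      (∀ x : ℕ, 1 ≤ x → sInf {i | f i = x} < sInf {i | f i = x + 1}) ∧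
      ((∀ x : ℕ, 1 ≤ x → {y : ℕ | 1 ≤ y ∧ C x y = true}.Finite) →
        ∀ x : ℕ, 1 ≤ x → {i : ℕ | f i = x}.Finite) ∧
      ((∃ x : ℕ, 1 ≤ x ∧ {y : ℕ | 1 ≤ y ∧ C x y = true}.Infinite) →
        ∃ N : ℕ, ∀ x : ℕ, N ≤ x → {i : ℕ | f i = x}.Infinite) := by
  refine ⟨seq C, computable_seq hC, one_le_seq, fun x hx => (isLeast_setOf_seq_eq hx).nonempty,
    fun x hx => ?_, fun hfin x _ => ?_, fun ⟨x₀, hx₀, hinf⟩ => ⟨x₀, fun x hx => ?_⟩⟩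
  · rw [(isLeast_setOf_seq_eq hx).csInf_eq, (isLeast_setOf_seq_eq (by omega)).csInf_eq]
    omega
  · exact (((finite_setOf_revisit_eq hfin x).image _).insert _).subset (setOf_seq_eq_subset x)
  · have hinj : Function.Injective (2 * · + 1) := fun m n h => by simp_all
    exact ((infinite_setOf_revisit_eq ⟨hx₀, hx⟩ hinf).image hinj.injOn).mono
      (image_subset_setOf_seq_eq x)
end

section
/- For every non-empty dyadic interval I and every integer t ≥ 2, there exists a t-sequence (I_2, …, I_t) with I_2 = I. -/
open MeasureTheory
open scoped ENNReal

/-- `S` is a `b`-adic interval: a semi-open interval `[a/b^m, (a+1)/b^m)` with `m ∈ ℕ`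
and `0 ≤ a < b^m`. -/
def IsBAdic (b : ℕ) (S : Set ℝ) : Prop :=
  ∃ m a : ℕ, a < b ^ m ∧ S = Set.Ico ((a : ℝ) / (b : ℝ) ^ m) (((a : ℝ) + 1) / (b : ℝ) ^ m)

/-- `I` (restricted to indices `2, …, t`) is a `t`-sequence: `I 2` is dyadic, and for
every base `b` with `2 ≤ b < t`, `I (b+1)` is a `(b+1)`-adic subinterval of `I b` with
`μ(I (b+1)) ≥ μ(I b)/(2(b+1))`. -/
def IsTSeq (t : ℕ) (I : ℕ → Set ℝ) : Prop :=
  IsBAdic 2 (I 2) ∧ ∀ b : ℕ, 2 ≤ b → b < t →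
    IsBAdic (b + 1) (I (b + 1)) ∧ I (b + 1) ⊆ I b ∧
      volume (I b) / (2 * ((b : ℝ≥0∞) + 1)) ≤ volume (I (b + 1))

/-! An interval `[x, y) ⊆ [0, 1)` of length `ℓ` contains the `c`-adic interval of length `c⁻ᴺ`
with numerator `⌈x cᴺ⌉` whenever `ℓ cᴺ ≥ 2`. Choosing `N` with `cᴺ⁻¹ ≤ 2 / ℓ < cᴺ` also gives
`c⁻ᴺ ≥ ℓ / (2c)`. Applying this with `c = b + 1` to the `b`-adic interval at each stage builds the
sequence greedily from `I`. -/

open Set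

lemma exists_Ico_div_pow_subset_Ico {c N : ℕ} {x y : ℝ} (hx : 0 ≤ x) (hy : y ≤ 1)
    (h : 2 ≤ (y - x) * (c : ℝ) ^ N) :
    ∃ a < c ^ N, Ico ((a : ℝ) / (c : ℝ) ^ N) (((a : ℝ) + 1) / (c : ℝ) ^ N) ⊆ Ico x y := by
  have hq : 0 < (c : ℝ) ^ N := by
    by_contra! hq
    nlinarith [pow_nonneg (Nat.cast_nonneg c : (0 : ℝ) ≤ c) N]
  set a := ⌈x * (c : ℝ) ^ N⌉₊
  have ha_ge : x * (c : ℝ) ^ N ≤ a := Nat.le_ceil _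
  have ha_lt : (a : ℝ) + 1 < y * (c : ℝ) ^ N := by
    linarith [Nat.ceil_lt_add_one (mul_nonneg hx hq.le)]
  refine ⟨a, ?_, Ico_subset_Ico ?_ ?_⟩
  · exact_mod_cast (show (a : ℝ) < (c : ℝ) ^ N by nlinarith)
  · rwa [le_div_iff₀ hq]
  · rw [div_le_iff₀ hq]; linarith

lemma exists_mul_pow_mem_Icc {c L : ℝ} (hc : 1 < c) (hL : 0 < L) (hL2 : L ≤ 2) :
    ∃ N : ℕ, 2 ≤ L * c ^ N ∧ L * c ^ N ≤ 2 * c := by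
  obtain ⟨n, hle, hlt⟩ := exists_nat_pow_near ((one_le_div hL).2 hL2) hc
  refine ⟨n + 1, ?_, ?_⟩
  · rw [div_lt_iff₀ hL] at hlt; linarith
  · rw [le_div_iff₀ hL] at hle; rw [pow_succ]; nlinarith

lemma exists_isBAdic_subset_Ico {c : ℕ} (hc : 1 < c) {x y : ℝ} (hx : 0 ≤ x) (hxy : x < y)
    (hy : y ≤ 1) :
    ∃ S, IsBAdic c S ∧ S ⊆ Ico x y ∧ volume (Ico x y) / (2 * c) ≤ volume S := by
  obtain ⟨N, hN2, hN⟩ := exists_mul_pow_mem_Icc (Nat.one_lt_cast.2 hc) (sub_pos.2 hxy) (by linarith)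
  obtain ⟨a, ha, hsub⟩ := exists_Ico_div_pow_subset_Ico hx hy hN2
  refine ⟨_, ⟨N, a, ha, rfl⟩, hsub, ENNReal.div_le_of_le_mul ?_⟩
  have hq : 0 < (c : ℝ) ^ N := by positivity
  rw [Real.volume_Ico, Real.volume_Ico, ← sub_div, add_sub_cancel_left,
    show (2 * c : ℝ≥0∞) = ENNReal.ofReal (2 * c) by simp, ← ENNReal.ofReal_mul (by positivity)]
  refine ENNReal.ofReal_le_ofReal ?_
  rw [div_mul_eq_mul_div, le_div_iff₀ hq]
  linarith

lemma IsBAdic.exists_eq_Ico {b : ℕ} (hb : 0 < b) {S : Set ℝ} (hS : IsBAdic b S) :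
    ∃ x y : ℝ, 0 ≤ x ∧ x < y ∧ y ≤ 1 ∧ S = Ico x y := by
  obtain ⟨m, a, ha, rfl⟩ := hS
  have hq : 0 < (b : ℝ) ^ m := by positivity
  refine ⟨_, _, by positivity, by gcongr; linarith, ?_, rfl⟩
  rw [div_le_one hq]
  exact_mod_cast ha

lemma IsBAdic.exists_succ_subset {b : ℕ} (hb : 0 < b) {S : Set ℝ} (hS : IsBAdic b S) :
    ∃ S', IsBAdic (b + 1) S' ∧ S' ⊆ S ∧ volume S / (2 * ((b : ℝ≥0∞) + 1)) ≤ volume S' := by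
  obtain ⟨x, y, hx, hxy, hy, rfl⟩ := hS.exists_eq_Ico hb
  simpa using exists_isBAdic_subset_Ico (Nat.lt_add_of_pos_left hb) hx hxy hy

theorem exists_tSeq_general (I : Set ℝ) (hI : IsBAdic 2 I) (t : ℕ) :
    ∃ Iseq : ℕ → Set ℝ, IsTSeq t Iseq ∧ Iseq 2 = I := by
  choose! next hnext using fun b (hb : 2 ≤ b) S (hS : IsBAdic b S) ↦
    hS.exists_succ_subset (by omega)
  let J : ℕ → Set ℝ := fun n ↦ Nat.rec I (fun k S ↦ next (k + 2) S) (n - 2)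
  have hJ : ∀ k, IsBAdic (k + 2) (J (k + 2)) := by
    intro k
    induction k with
    | zero => exact hI
    | succ k ih => exact (hnext (k + 2) (by omega) _ ih).1
  refine ⟨J, ⟨hI, fun b hb _ ↦ ?_⟩, rfl⟩
  obtain ⟨k, rfl⟩ := Nat.exists_eq_add_of_le' hb
  exact hnext (k + 2) hb _ (hJ k)

/-- For every non-empty dyadic interval `I` and every `t ≥ 2`, there is a `t`-sequence
`(I_2, …, I_t)` with `I_2 = I`. -/
theorem exists_tSeq (I : Set ℝ) (hI : IsBAdic 2 I) (t : ℕ) (ht : 2 ≤ t) :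
    ∃ Iseq : ℕ → Set ℝ, IsTSeq t Iseq ∧ Iseq 2 = I :=
  exists_tSeq_general I hI t
end
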